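/- arXiv:2304.06451 — 2 statements merged into one kernel-verified Lean document; each statement's English description precedes it below -/
import Mathlib

section
/- Let P : ℕ → ℝ^{n×n} be a sequence of symmetric positive definite matrices, A : ℕ → ℝ^{n×n}, C ∈ ℝ^{1×n}, and γ > 1. Suppose for every k the block matrix [[-P(k), A(k)ᵀP(k+1), Cᵀ, Cᵀ]; [P(k+1)A(k), -P(k+1), 0, 0]; [C, 0, -1, 0]; [C, 0, 0, -(γ²-1)]] (arranged consistently with inequality (37) in the paper) is negative definite. Then for the system x(k+1) = A(k)x(k), with e(k) = C x(k) + Δ(k) for any sequence Δ, the Lyapunov function V(k) = x(k)ᵀ P(k) x(k) satisfies V(k+1) − V(k) + e(k)² − γ² Δ(k)² < 0 whenever (x(k), Δ(k)) ≠ 0. -/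
/-! Evaluating the quadratic form of the LMI block matrix at the vector
`(x(k), x(k+1), C x(k), Δ(k))`, with `x(k+1) = A(k) x(k)`, gives exactly
`V(k+1) - V(k) + (C x(k) + Δ(k))² - γ² Δ(k)²`; negative definiteness makes it negative
as soon as the vector is nonzero, i.e. as soon as `(x(k), Δ(k)) ≠ 0`. -/

open Matrix

def NegDef {m : Type*} [Fintype m] (M : Matrix m m ℝ) : Prop := (-M).PosDef

theorem NegDef.dotProduct_mulVec_neg {m : Type*} [Fintype m] {M : Matrix m m ℝ} (hM : NegDef M)
    {v : m → ℝ} (hv : v ≠ 0) : v ⬝ᵥ M *ᵥ v < 0 := by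
  have := hM.dotProduct_mulVec_pos hv
  simp only [star_trivial, neg_mulVec, dotProduct_neg] at this
  linarith

section
variable {n m : Type*} [Fintype n] [Fintype m] [DecidableEq m]

def lyapunovLMI (P Q A : Matrix n n ℝ) (C : Matrix m n ℝ) (γ : ℝ) :
    Matrix ((n ⊕ n) ⊕ (m ⊕ m)) ((n ⊕ n) ⊕ (m ⊕ m)) ℝ :=
  fromBlocks (fromBlocks (-P) (Aᵀ * Q) (Q * A) (-Q)) (fromBlocks Cᵀ Cᵀ 0 0)
    (fromBlocks C 0 C 0) (fromBlocks (-1) 0 0 ((-(γ ^ 2 - 1)) • 1))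

theorem lyapunovLMI_quadForm (P Q A : Matrix n n ℝ) (C : Matrix m n ℝ) (γ : ℝ)
    (x : n → ℝ) (d : m → ℝ) :
    let v := Sum.elim (Sum.elim x (A *ᵥ x)) (Sum.elim (C *ᵥ x) d)
    v ⬝ᵥ lyapunovLMI P Q A C γ *ᵥ v =
      A *ᵥ x ⬝ᵥ Q *ᵥ (A *ᵥ x) - x ⬝ᵥ P *ᵥ x + (C *ᵥ x + d) ⬝ᵥ (C *ᵥ x + d)
        - γ ^ 2 * (d ⬝ᵥ d) := by
  simp only [lyapunovLMI, fromBlocks_mulVec, Sum.elim_comp_inl, Sum.elim_comp_inr,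
    sumElim_dotProduct_sumElim, ← mulVec_mulVec, neg_mulVec, one_mulVec, smul_mulVec,
    zero_mulVec, dotProduct_zero, add_zero, zero_add, dotProduct_add, add_dotProduct,
    dotProduct_neg, dotProduct_smul, smul_eq_mul]
  rw [dotProduct_mulVec x Aᵀ, vecMul_transpose, dotProduct_mulVec x Cᵀ, vecMul_transpose,
    dotProduct_mulVec x Cᵀ, vecMul_transpose, dotProduct_comm (C *ᵥ x) d]
  ring

theorem lyapunovLMI_dissipation {P Q A : Matrix n n ℝ} {C : Matrix m n ℝ} {γ : ℝ}
    (hLMI : NegDef (lyapunovLMI P Q A C γ)) {x : n → ℝ} {d : m → ℝ} (hxd : x ≠ 0 ∨ d ≠ 0) :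
    A *ᵥ x ⬝ᵥ Q *ᵥ (A *ᵥ x) - x ⬝ᵥ P *ᵥ x + (C *ᵥ x + d) ⬝ᵥ (C *ᵥ x + d)
      - γ ^ 2 * (d ⬝ᵥ d) < 0 := by
  have hv : Sum.elim (Sum.elim x (A *ᵥ x)) (Sum.elim (C *ᵥ x) d) ≠ 0 := by
    rcases hxd with hx | hd
    · exact fun h => hx (funext fun i => congrFun h (.inl (.inl i)))
    · exact fun h => hd (funext fun i => congrFun h (.inr (.inr i)))
  simpa only [lyapunovLMI_quadForm] using hLMI.dotProduct_mulVec_neg hv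

end

theorem stmt5_general {n : ℕ} (P A : ℕ → Matrix (Fin n) (Fin n) ℝ) (C : Matrix (Fin 1) (Fin n) ℝ)
    (γ : ℝ)
    (hLMI : ∀ k, NegDef (fromBlocks
        (fromBlocks (-(P k)) ((A k)ᵀ * P (k + 1)) (P (k + 1) * A k) (-(P (k + 1))))
        (fromBlocks Cᵀ Cᵀ 0 0)
        (fromBlocks C 0 C 0)
        (fromBlocks (-1) 0 0 ((-(γ ^ 2 - 1)) • (1 : Matrix (Fin 1) (Fin 1) ℝ)))))
    (x : ℕ → Fin n → ℝ) (hx : ∀ k, x (k + 1) = (A k).mulVec (x k))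
    (Δ : ℕ → ℝ) (e V : ℕ → ℝ)
    (he : ∀ k, e k = C.mulVec (x k) 0 + Δ k)
    (hV : ∀ k, V k = x k ⬝ᵥ (P k).mulVec (x k)) :
    ∀ k, (x k ≠ 0 ∨ Δ k ≠ 0) →
      V (k + 1) - V k + e k ^ 2 - γ ^ 2 * Δ k ^ 2 < 0 := by
  intro k hk
  have hΔ : (fun _ : Fin 1 => Δ k) ≠ 0 ↔ Δ k ≠ 0 :=
    not_congr ⟨fun h => congrFun h 0, fun h => funext fun _ => h⟩
  have hdiss := lyapunovLMI_dissipation (hLMI k) (d := fun _ => Δ k) (hk.imp_right hΔ.mpr)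
  have hdot : ∀ u w : Fin 1 → ℝ, u ⬝ᵥ w = u 0 * w 0 := fun _ _ => Fin.sum_univ_one _
  rw [hdot, hdot, Pi.add_apply] at hdiss
  rw [hV, hV, hx, he]
  linarith

/-- if for every `k` the block matrix
`[[-P(k), A(k)ᵀP(k+1), Cᵀ, Cᵀ]; [P(k+1)A(k), -P(k+1), 0, 0]; [C, 0, -1, 0]; [C, 0, 0, -(γ²-1)]]`
is negative definite, then along any trajectory of `x(k+1) = A(k) x(k)` with output
`e(k) = C x(k) + Δ(k)`, the Lyapunov function `V(k) = x(k)ᵀ P(k) x(k)` satisfies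
`V(k+1) - V(k) + e(k)² - γ² Δ(k)² < 0` whenever `(x(k), Δ(k)) ≠ 0`. -/
theorem stmt5 {n : ℕ} (P A : ℕ → Matrix (Fin n) (Fin n) ℝ) (C : Matrix (Fin 1) (Fin n) ℝ)
    (γ : ℝ) (hγ : 1 < γ) (hP : ∀ k, (P k).PosDef)
    (hLMI : ∀ k, NegDef (fromBlocks
        (fromBlocks (-(P k)) ((A k)ᵀ * P (k + 1)) (P (k + 1) * A k) (-(P (k + 1))))
        (fromBlocks Cᵀ Cᵀ 0 0)
        (fromBlocks C 0 C 0)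
        (fromBlocks (-1) 0 0 ((-(γ ^ 2 - 1)) • (1 : Matrix (Fin 1) (Fin 1) ℝ)))))
    (x : ℕ → Fin n → ℝ) (hx : ∀ k, x (k + 1) = (A k).mulVec (x k))
    (Δ : ℕ → ℝ) (e V : ℕ → ℝ)
    (he : ∀ k, e k = C.mulVec (x k) 0 + Δ k)
    (hV : ∀ k, V k = x k ⬝ᵥ (P k).mulVec (x k)) :
    ∀ k, (x k ≠ 0 ∨ Δ k ≠ 0) →
      V (k + 1) - V k + e k ^ 2 - γ ^ 2 * Δ k ^ 2 < 0 :=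
  stmt5_general P A C γ hLMI x hx Δ e V he hV
end

section
/- Let F₁, ..., F_N be fixed n×n real matrices and suppose σ : ℕ → ℝ^N satisfies σᵢ(k) ≥ 0 and Σᵢ σᵢ(k) = 1 for all k. Suppose there exist symmetric positive definite matrices Q₁,...,Q_N and matrices M₁,...,M_N, T₁,...,T_N such that for all i, j: [[-Mᵢ - Mᵢᵀ + Qᵢ, (FᵢMᵢ + G Tᵢ)ᵀ]; [FᵢMᵢ + G Tᵢ, -Q_j]] < 0. Then each Mᵢ is invertible, and the time-varying system x(k+1) = (F(σ(k)) + G K(k)) x(k) with F(σ) = Σᵢ σᵢ Fᵢ and K(k) = Σᵢ σᵢ(k) Tᵢ Mᵢ^{-1} is asymptotically stable, admitting the parameter-dependent Lyapunov function V(x, σ) = xᵀ P(σ) x with P(σ) = (Σᵢ σᵢ Mᵢ Qᵢ^{-1} Mᵢᵀ)^{-1}-type construction ensuring V decreases along trajectories. -/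
/-
Put `Aᵢ = Fᵢ + G Tᵢ Mᵢ⁻¹` and `Pᵢ = Qᵢ⁻¹`, so that `Fᵢ Mᵢ + G Tᵢ = Aᵢ Mᵢ`. The top-left block
of the LMI gives `Mᵢ + Mᵢᵀ > Qᵢ > 0`, so `Mᵢ` is invertible. Its Schur complement with respect
to `Q_j`, plus `(Mᵢ - Qᵢ)ᵀ Qᵢ⁻¹ (Mᵢ - Qᵢ) ≥ 0`, is `Mᵢᵀ (Pᵢ - Aᵢᵀ P_j Aᵢ) Mᵢ > 0`: every pair of
vertices satisfies the Stein inequality `Aᵢᵀ P_j Aᵢ < Pᵢ`. For `P(k) = ∑ σᵢ(k) Pᵢ`, convexity of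
`v ↦ vᵀ P_j v` turns these into `V(k+1) + ε ‖x(k)‖² ≤ V(k)` with one `ε > 0` for all the finitely
many pairs (compactness of the unit sphere). Hence `∑ ‖x(k)‖²` converges and `x(k) → 0`.
-/

open Matrix Filter

open Topology

variable {ι n : Type*}

namespace Matrix

section Field

variable {K : Type*} [Field K] [PartialOrder K] [StarRing K] {m : Type*} [Fintype n] [Fintype m]
  [DecidableEq n]

theorem isUnit_of_posDef_add_conjTranspose {M : Matrix n n K} (h : (M + Mᴴ).PosDef) :
    IsUnit M := by
  by_contra hM
  obtain ⟨x, y, hxy, hne⟩ := Function.not_injective_iff.mp <| mulVec_injective_iff_isUnit.not.mpr hM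
  have hker : M *ᵥ (x - y) = 0 := by rw [mulVec_sub, hxy, sub_self]
  have := h.dotProduct_mulVec_pos (sub_ne_zero.mpr hne)
  rw [add_mulVec, dotProduct_add, dotProduct_mulVec _ Mᴴ, ← star_mulVec, hker] at this
  simp at this

theorem PosDef.sub_mul_inv_mul_conjTranspose_of_fromBlocks {A : Matrix m m K} {B : Matrix m n K}
    {D : Matrix n n K} (h : (fromBlocks A B Bᴴ D).PosDef) :
    (A - B * D⁻¹ * Bᴴ).PosDef := by
  have hD : D.PosDef := h.submatrix Sum.inr_injective
  let _ := hD.isUnit.invertible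
  refine .of_dotProduct_mulVec_pos ((IsHermitian.fromBlocks₂₂ A B hD.1).mp h.1) fun x hx => ?_
  have hne : (x ⊕ᵥ -((D⁻¹ * Bᴴ) *ᵥ x)) ≠ 0 := fun h0 => hx (by
    simpa using congrArg (fun v => v ∘ Sum.inl) h0)
  have := h.dotProduct_mulVec_pos hne
  rwa [dotProduct_mulVec, schur_complement_eq₂₂ A B _ _ hD.1, add_neg_cancel, dotProduct_zero,
    zero_add, ← dotProduct_mulVec] at this

theorem PosDef.posSemidef_conjTranspose_mul_inv_mul_sub {Q : Matrix n n K} (hQ : Q.PosDef)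
    (M : Matrix n n K) : (Mᴴ * Q⁻¹ * M - (M + Mᴴ - Q)).PosSemidef := by
  let _ := hQ.isUnit.invertible
  have hsq : Mᴴ * Q⁻¹ * M - (M + Mᴴ - Q) = (M - Q)ᴴ * Q⁻¹ * (M - Q) := by
    simp only [conjTranspose_sub, hQ.1.eq, Matrix.sub_mul, Matrix.mul_sub, Matrix.mul_assoc,
      inv_mul_of_invertible, mul_inv_of_invertible, Matrix.mul_one, Matrix.one_mul]
    abel
  rw [hsq]
  exact hQ.inv.posSemidef.conjTranspose_mul_mul_same _

theorem PosDef.inv_sub_conjTranspose_mul_inv_mul_of_fromBlocks [AddLeftMono K]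
    {Q Q' M A : Matrix n n K} (hQ : Q.PosDef) (hM : IsUnit M)
    (h : (fromBlocks (M + Mᴴ - Q) (-(A * M)ᴴ) (-(A * M)) Q').PosDef) :
    (Q⁻¹ - Aᴴ * Q'⁻¹ * A).PosDef := by
  have hSchur := PosDef.sub_mul_inv_mul_conjTranspose_of_fromBlocks
    (B := -(A * M)ᴴ) (by rwa [conjTranspose_neg, conjTranspose_conjTranspose])
  have hsum := hSchur.add_posSemidef (hQ.posSemidef_conjTranspose_mul_inv_mul_sub M)
  rw [← hM.posDef_star_left_conjugate_iff]
  convert hsum using 1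
  simp only [star_eq_conjTranspose, conjTranspose_neg, conjTranspose_conjTranspose,
    conjTranspose_mul, Matrix.mul_sub, Matrix.sub_mul, Matrix.neg_mul, Matrix.mul_neg, neg_neg,
    Matrix.mul_assoc]
  abel

end Field

theorem dotProduct_sum_smul_mulVec [Fintype ι] [Fintype n] {α : Type*} [CommSemiring α]
    (c : ι → α) (P : ι → Matrix n n α) (v : n → α) :
    v ⬝ᵥ (∑ i, c i • P i) *ᵥ v = ∑ i, c i * (v ⬝ᵥ P i *ᵥ v) := by
  simp [sum_mulVec, dotProduct_sum, smul_mulVec, dotProduct_smul]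

theorem PosSemidef.convexOn_dotProduct_mulVec [Fintype n] {R : Matrix n n ℝ} (hR : R.PosSemidef) :
    ConvexOn ℝ Set.univ fun v => v ⬝ᵥ R *ᵥ v := by
  refine ⟨convex_univ, fun x _ y _ a b ha hb hab => ?_⟩
  have hxy : 0 ≤ (x - y) ⬝ᵥ R *ᵥ (x - y) := by simpa using hR.dotProduct_mulVec_nonneg (x - y)
  obtain rfl : b = 1 - a := by linarith
  have key : a • (x ⬝ᵥ R *ᵥ x) + (1 - a) • (y ⬝ᵥ R *ᵥ y)
      - (a • x + (1 - a) • y) ⬝ᵥ R *ᵥ (a • x + (1 - a) • y)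
      = a * (1 - a) * ((x - y) ⬝ᵥ R *ᵥ (x - y)) := by
    simp only [mulVec_add, mulVec_sub, mulVec_smul, dotProduct_add, add_dotProduct,
      dotProduct_sub, sub_dotProduct, dotProduct_smul, smul_dotProduct, smul_eq_mul]
    ring
  linarith [mul_nonneg (mul_nonneg ha hb) hxy]

theorem PosSemidef.dotProduct_mulVec_sum_smul_le [Fintype ι] [Fintype n]
    {R : Matrix n n ℝ} (hR : R.PosSemidef) {c : ι → ℝ} (hc : c ∈ stdSimplex ℝ ι) (w : ι → n → ℝ) :
    (∑ i, c i • w i) ⬝ᵥ R *ᵥ (∑ i, c i • w i) ≤ ∑ i, c i * (w i ⬝ᵥ R *ᵥ w i) :=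
  hR.convexOn_dotProduct_mulVec.map_sum_le (fun i _ => hc.1 i) hc.2 fun _ _ => Set.mem_univ _

theorem posDef_sum_smul_of_mem_stdSimplex [Fintype ι] {P : ι → Matrix n n ℝ}
    (hP : ∀ i, (P i).PosDef) {c : ι → ℝ} (hc : c ∈ stdSimplex ℝ ι) : (∑ i, c i • P i).PosDef := by
  classical
  obtain ⟨i₀, hi₀⟩ : ∃ i, 0 < c i := by
    by_contra! h
    have := Finset.sum_nonpos fun i (_ : i ∈ Finset.univ) => h i
    linarith [hc.2]
  rw [← Finset.sum_filter_of_ne (p := fun i => 0 < c i) fun i _ hi =>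
    (hc.1 i).lt_of_ne' fun h0 => hi (by simp [h0])]
  exact posDef_sum ⟨i₀, by simpa using hi₀⟩ fun i hi => (hP i).smul (by simpa using hi)

theorem PosDef.exists_pos_mul_sq_norm_le [Fintype n] {S : Matrix n n ℝ} (hS : S.PosDef) :
    ∃ ε > 0, ∀ v, ε * ‖v‖ ^ 2 ≤ v ⬝ᵥ S *ᵥ v := by
  have hpos : ∀ v, v ≠ 0 → 0 < v ⬝ᵥ S *ᵥ v := fun v hv => by
    simpa using hS.dotProduct_mulVec_pos hv
  have hnormalize : ∀ v : n → ℝ, v ≠ 0 → ‖v‖⁻¹ • v ∈ Metric.sphere 0 1 := fun v hv => by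
    simp [norm_smul, hv]
  by_cases hsphere : (Metric.sphere (0 : n → ℝ) 1).Nonempty
  · obtain ⟨u, hu, hmin⟩ := (isCompact_sphere (0 : n → ℝ) 1).exists_isMinOn hsphere
      (by fun_prop : Continuous fun v : n → ℝ => v ⬝ᵥ S *ᵥ v).continuousOn
    refine ⟨u ⬝ᵥ S *ᵥ u, hpos u (ne_zero_of_mem_unit_sphere ⟨u, hu⟩), fun v => ?_⟩
    rcases eq_or_ne v 0 with rfl | hv
    · simp
    have hle := isMinOn_iff.mp hmin _ (hnormalize v hv)
    simp only [mulVec_smul, dotProduct_smul, smul_dotProduct, smul_eq_mul] at hle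
    calc u ⬝ᵥ S *ᵥ u * ‖v‖ ^ 2 ≤ ‖v‖⁻¹ * (‖v‖⁻¹ * (v ⬝ᵥ S *ᵥ v)) * ‖v‖ ^ 2 := by gcongr
      _ = v ⬝ᵥ S *ᵥ v := by field_simp
  · refine ⟨1, one_pos, fun v => ?_⟩
    obtain rfl : v = 0 := by
      by_contra hv
      exact hsphere ⟨_, hnormalize v hv⟩
    simp

end Matrix

theorem exists_pos_forall_mul_sq_norm_le [Finite ι] [Fintype n] {S : ι → Matrix n n ℝ}
    (hS : ∀ i, (S i).PosDef) : ∃ ε > 0, ∀ i v, ε * ‖v‖ ^ 2 ≤ v ⬝ᵥ S i *ᵥ v := by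
  choose ε hε hS using fun i => (hS i).exists_pos_mul_sq_norm_le
  -- `ι` may be empty, so a common lower bound is taken near `0⁺` rather than as `min i, ε i`.
  have hsmall : ∀ᶠ δ in 𝓝[>] (0 : ℝ), ∀ i, δ ≤ ε i :=
    eventually_all.mpr fun i => mem_of_superset (Ioo_mem_nhdsGT (hε i)) fun _ h => h.2.le
  obtain ⟨δ, hδ, hδpos⟩ := (hsmall.and eventually_mem_nhdsWithin).exists
  exact ⟨δ, hδpos, fun i v => (mul_le_mul_of_nonneg_right (hδ i) (sq_nonneg _)).trans (hS i v)⟩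

theorem exists_pos_lyapunov_decrease [Fintype ι] [Fintype n] {A P : ι → Matrix n n ℝ}
    (hP : ∀ i, (P i).PosSemidef) (hS : ∀ i j, (P i - (A i)ᵀ * P j * A i).PosDef) :
    ∃ ε > 0, ∀ c ∈ stdSimplex ℝ ι, ∀ c' ∈ stdSimplex ℝ ι, ∀ v,
      ((∑ i, c i • A i) *ᵥ v) ⬝ᵥ (∑ j, c' j • P j) *ᵥ ((∑ i, c i • A i) *ᵥ v) + ε * ‖v‖ ^ 2
        ≤ v ⬝ᵥ (∑ i, c i • P i) *ᵥ v := by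
  obtain ⟨ε, hε, hSε⟩ := exists_pos_forall_mul_sq_norm_le fun p : ι × ι => hS p.1 p.2
  refine ⟨ε, hε, fun c hc c' hc' v => ?_⟩
  have hvertex : ∀ i j, (A i *ᵥ v) ⬝ᵥ P j *ᵥ (A i *ᵥ v) ≤ v ⬝ᵥ P i *ᵥ v - ε * ‖v‖ ^ 2 := by
    intro i j
    have := hSε (i, j) v
    rw [sub_mulVec, dotProduct_sub, ← mulVec_mulVec, ← mulVec_mulVec,
      dotProduct_mulVec v (A i)ᵀ, vecMul_transpose] at this
    linarith
  have hjensen : ∀ j, ((∑ i, c i • A i) *ᵥ v) ⬝ᵥ P j *ᵥ ((∑ i, c i • A i) *ᵥ v)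
      ≤ ∑ i, c i * ((A i *ᵥ v) ⬝ᵥ P j *ᵥ (A i *ᵥ v)) := fun j => by
    simpa [sum_mulVec, smul_mulVec] using (hP j).dotProduct_mulVec_sum_smul_le hc (A · *ᵥ v)
  calc _ = ∑ j, c' j * (((∑ i, c i • A i) *ᵥ v) ⬝ᵥ P j *ᵥ ((∑ i, c i • A i) *ᵥ v))
        + ε * ‖v‖ ^ 2 := by rw [dotProduct_sum_smul_mulVec]
    _ ≤ ∑ j, c' j * ∑ i, c i * (v ⬝ᵥ P i *ᵥ v - ε * ‖v‖ ^ 2) + ε * ‖v‖ ^ 2 := by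
      gcongr with j _ i _
      · exact hc'.1 j
      · exact (hjensen j).trans (Finset.sum_le_sum fun i _ =>
          mul_le_mul_of_nonneg_left (hvertex i j) (hc.1 i))
    _ = v ⬝ᵥ (∑ i, c i • P i) *ᵥ v := by
      simp only [← Finset.sum_mul, hc'.2, one_mul, mul_sub, Finset.sum_sub_distrib, hc.2,
        dotProduct_sum_smul_mulVec]
      ring

theorem tendsto_zero_of_add_mul_sq_norm_le {E : Type*} [SeminormedAddCommGroup E]
    {x : ℕ → E} {V : ℕ → ℝ} {ε : ℝ} (hε : 0 < ε) (hV : ∀ k, 0 ≤ V k)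
    (hdec : ∀ k, V (k + 1) + ε * ‖x k‖ ^ 2 ≤ V k) : Tendsto x atTop (𝓝 0) := by
  have hpartial : ∀ K, V K + ∑ k ∈ Finset.range K, ε * ‖x k‖ ^ 2 ≤ V 0 := by
    intro K
    induction K with
    | zero => simp
    | succ K ih => rw [Finset.sum_range_succ]; linarith [hdec K]
  have hsum : Summable fun k => ε * ‖x k‖ ^ 2 :=
    summable_of_sum_range_le (c := V 0) (fun k => by positivity) fun K => by
      linarith [hpartial K, hV K]
  have hsq : Tendsto (fun k => ‖x k‖ ^ 2) atTop (𝓝 0) := by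
    simpa [hε.ne'] using hsum.tendsto_atTop_zero.const_mul ε⁻¹
  rw [tendsto_zero_iff_norm_tendsto_zero]
  simpa using hsq.sqrt

theorem NegDef.posDef_fromBlocks [Fintype n] {M Q Q' C : Matrix n n ℝ}
    (h : NegDef (fromBlocks (-M - Mᵀ + Q) Cᵀ C (-Q'))) :
    (fromBlocks (M + Mᴴ - Q) (-Cᴴ) (-C) Q').PosDef := by
  simp only [conjTranspose_eq_transpose_of_trivial]
  rwa [NegDef, fromBlocks_neg, neg_neg, show -(-M - Mᵀ + Q) = M + Mᵀ - Q by abel] at h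

/-- polytopic LMI stabilization. If the LMIs
`[[-Mᵢ - Mᵢᵀ + Qᵢ, (FᵢMᵢ + GTᵢ)ᵀ]; [FᵢMᵢ + GTᵢ, -Q_j]] < 0` hold for all `i, j`
with `Qᵢ` symmetric positive definite, then each `Mᵢ` is invertible and the
closed-loop time-varying system `x(k+1) = (F(σ(k)) + G K(k)) x(k)`, with
`F(σ) = ∑ᵢ σᵢ Fᵢ` and `K(k) = ∑ᵢ σᵢ(k) Tᵢ Mᵢ⁻¹`, is asymptotically stable,
admitting a parameter-dependent quadratic Lyapunov function decreasing along
nonzero trajectories. -/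
theorem stmt11 {n m N : ℕ}
    (F : Fin N → Matrix (Fin n) (Fin n) ℝ) (G : Matrix (Fin n) (Fin m) ℝ)
    (σ : ℕ → Fin N → ℝ) (hσ0 : ∀ k i, 0 ≤ σ k i) (hσ1 : ∀ k, ∑ i, σ k i = 1)
    (Q M : Fin N → Matrix (Fin n) (Fin n) ℝ) (T : Fin N → Matrix (Fin m) (Fin n) ℝ)
    (hQ : ∀ i, (Q i).PosDef)
    (hLMI : ∀ i j, NegDef (fromBlocks
        (-(M i) - (M i)ᵀ + Q i) ((F i * M i + G * T i)ᵀ)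
        (F i * M i + G * T i) (-(Q j))))
    (K : ℕ → Matrix (Fin m) (Fin n) ℝ)
    (hK : ∀ k, K k = ∑ i, σ k i • (T i * (M i)⁻¹)) :
    (∀ i, IsUnit (M i)) ∧
    (∀ x : ℕ → Fin n → ℝ,
      (∀ k, x (k + 1) = ((∑ i, σ k i • F i) + G * K k).mulVec (x k)) →
      Tendsto x atTop (nhds 0)) ∧
    (∃ P : ℕ → Matrix (Fin n) (Fin n) ℝ, (∀ k, (P k).PosDef) ∧
      ∀ x : ℕ → Fin n → ℝ,
        (∀ k, x (k + 1) = ((∑ i, σ k i • F i) + G * K k).mulVec (x k)) →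
        ∀ k, x k ≠ 0 →
          x (k + 1) ⬝ᵥ (P (k + 1)).mulVec (x (k + 1)) < x k ⬝ᵥ (P k).mulVec (x k)) := by
  have hMu : ∀ i, IsUnit (M i) := fun i => by
    have hblock : (M i + (M i)ᴴ - Q i).PosDef := (hLMI i i).posDef_fromBlocks.submatrix Sum.inl_injective
    simpa using isUnit_of_posDef_add_conjTranspose (by simpa using hblock.add (hQ i))
  set A : Fin N → Matrix (Fin n) (Fin n) ℝ := fun i => F i + G * (T i * (M i)⁻¹) with hA
  have hAM : ∀ i, A i * M i = F i * M i + G * T i := fun i => by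
    simp [hA, Matrix.add_mul, Matrix.mul_assoc,
      nonsing_inv_mul _ ((isUnit_iff_isUnit_det _).mp (hMu i))]
  have hStein : ∀ i j, ((Q i)⁻¹ - (A i)ᵀ * (Q j)⁻¹ * A i).PosDef := fun i j => by
    rw [← conjTranspose_eq_transpose_of_trivial]
    exact (hQ i).inv_sub_conjTranspose_mul_inv_mul_of_fromBlocks (hMu i) (hAM i ▸ (hLMI i j).posDef_fromBlocks)
  have hclosed : ∀ k, (∑ i, σ k i • F i) + G * K k = ∑ i, σ k i • A i := fun k => by
    simp [hK, hA, Matrix.mul_sum, smul_add, Finset.sum_add_distrib]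
  have hσ : ∀ k, σ k ∈ stdSimplex ℝ (Fin N) := fun k => ⟨hσ0 k, hσ1 k⟩
  obtain ⟨ε, hε, hdec⟩ := exists_pos_lyapunov_decrease (fun i => (hQ i).inv.posSemidef) hStein
  set P : ℕ → Matrix (Fin n) (Fin n) ℝ := fun k => ∑ i, σ k i • (Q i)⁻¹
  have hP : ∀ k, (P k).PosDef := fun k =>
    posDef_sum_smul_of_mem_stdSimplex (fun i => (hQ i).inv) (hσ k)
  have hV : ∀ x : ℕ → Fin n → ℝ, (∀ k, x (k + 1) = ((∑ i, σ k i • F i) + G * K k) *ᵥ x k) →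
      ∀ k, x (k + 1) ⬝ᵥ P (k + 1) *ᵥ x (k + 1) + ε * ‖x k‖ ^ 2 ≤ x k ⬝ᵥ P k *ᵥ x k := by
    intro x hx k
    rw [hx k, hclosed k]
    exact hdec _ (hσ k) _ (hσ (k + 1)) _
  refine ⟨hMu, fun x hx => ?_, P, hP, fun x hx k hk => ?_⟩
  · refine tendsto_zero_of_add_mul_sq_norm_le (V := fun k => x k ⬝ᵥ P k *ᵥ x k) hε (fun k => ?_)
      (hV x hx)
    simpa using (hP k).posSemidef.dotProduct_mulVec_nonneg (x k)
  · have hxk : 0 < ε * ‖x k‖ ^ 2 := by positivity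
    linarith [hV x hx k]
end
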